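/- arXiv:0911.4638 — 2 statements merged into one kernel-verified Lean document; each statement's English description precedes it below -/
import Mathlib

section
/- Let A be an n×n real matrix with n ≥ 1. Then for any vectors x, y ∈ ℝ^n, |⟨(Adj A) x, y⟩| ≤ ‖x‖ ‖y‖ ‖A‖_{HS}^{n−1} (n−1)^{−(n−1)/2}, where Adj A is the adjugate (classical adjoint) of A and ‖·‖_{HS} is the Hilbert–Schmidt (Frobenius) norm. -/
/-!
Put `v = Adj A x` and `M = A Aᵀ`. Since `Adj M = (Adj A)ᵀ Adj A`, we have
`‖v‖² = xᵀ (Adj M) x`. Diagonalising the positive semidefinite matrix `M` in an orthonormal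
eigenbasis, with eigenvalues `μ₁, …, μₙ ≥ 0`, the matrix `Adj M` is diagonal in the same basis
with eigenvalues `∏_{j ≠ i} μⱼ`. By AM–GM each of these is at most
`(tr M / (n-1))^(n-1) = (‖A‖²_HS / (n-1))^(n-1)`, which bounds `‖v‖²`; Cauchy–Schwarz for
`⟨v, y⟩` finishes the proof.
-/

open Matrix Finset
open scoped ComplexOrder

/-- The Hilbert–Schmidt (Frobenius) norm of a matrix. -/
noncomputable def hsNorm {n : ℕ} (A : Matrix (Fin n) (Fin n) ℝ) : ℝ :=
  Real.sqrt (∑ i, ∑ j, A i j ^ 2)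

theorem Real.prod_le_sum_div_card_pow {ι : Type*} (s : Finset ι) (z : ι → ℝ)
    (hz : ∀ i ∈ s, 0 ≤ z i) : ∏ i ∈ s, z i ≤ ((∑ i ∈ s, z i) / #s) ^ #s := by
  rcases s.eq_empty_or_nonempty with rfl | hs
  · simp
  have hcard : (#s : ℝ) ≠ 0 := by positivity
  have amgm := Real.geom_mean_le_arith_mean s (fun _ ↦ 1) z (fun _ _ ↦ zero_le_one)
    (by simpa using hs.card_pos) hz
  simp only [Real.rpow_one, one_mul, sum_const, nsmul_eq_mul, mul_one] at amgm
  calc ∏ i ∈ s, z i = ((∏ i ∈ s, z i) ^ (#s : ℝ)⁻¹) ^ #s :=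
        (Real.rpow_inv_natCast_pow (prod_nonneg hz) (by simpa using hcard)).symm
    _ ≤ _ := by gcongr; exact Real.rpow_nonneg (prod_nonneg hz) _

theorem Real.prod_erase_le_sum_div_pow {ι : Type*} [Fintype ι] [DecidableEq ι] {m : ℕ}
    (hcard : Fintype.card ι = m + 1) {μ : ι → ℝ} (hμ : ∀ i, 0 ≤ μ i) (i : ι) :
    ∏ j ∈ univ.erase i, μ j ≤ ((∑ j, μ j) / m) ^ m := by
  have hm : #(univ.erase i) = m := by rw [card_erase_of_mem (mem_univ i), card_univ, hcard]; rfl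
  calc ∏ j ∈ univ.erase i, μ j ≤ ((∑ j ∈ univ.erase i, μ j) / m) ^ m := by
        simpa only [hm] using Real.prod_le_sum_div_card_pow (univ.erase i) μ fun j _ ↦ hμ j
    _ ≤ ((∑ j, μ j) / m) ^ m := by
        gcongr
        · exact div_nonneg (sum_nonneg fun j _ ↦ hμ j) m.cast_nonneg
        · exact fun j _ _ ↦ hμ j
        · exact subset_univ _

theorem Real.sqrt_sq_div_natCast_pow {s : ℝ} (hs : 0 ≤ s) (m : ℕ) :
    √((s ^ 2 / m) ^ m) = s ^ m * (m : ℝ) ^ (-((m : ℝ) / 2)) := by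
  rw [div_pow, ← pow_mul, Real.sqrt_div' _ (by positivity), mul_comm 2, pow_mul,
    Real.sqrt_sq (by positivity), div_eq_mul_inv, Real.sqrt_eq_rpow, ← Real.rpow_natCast (m : ℝ),
    ← Real.rpow_mul m.cast_nonneg, Real.rpow_neg m.cast_nonneg]
  ring_nf

namespace Matrix

theorem dotProduct_self_eq_sum_sq {n R : Type*} [Fintype n] [Semiring R] (x : n → R) :
    x ⬝ᵥ x = ∑ i, x i ^ 2 := by
  simp [dotProduct, sq]

theorem trace_mul_transpose_self {m n R : Type*} [Fintype m] [Fintype n] [CommSemiring R]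
    (A : Matrix m n R) : (A * Aᵀ).trace = ∑ i, ∑ j, A i j ^ 2 := by
  simp [trace, mul_apply, sq]

variable {n : Type*} [Fintype n] [DecidableEq n]

section CommRing

variable {R : Type*} [CommRing R]

theorem adjugate_eq_det_smul_of_mul_eq_one {P Q : Matrix n n R} (h : P * Q = 1) :
    adjugate P = P.det • Q := by
  rw [← mul_one (adjugate P), ← h, ← mul_assoc, adjugate_mul, smul_mul, one_mul]

theorem adjugate_unitary_conj [StarRing R] {U : Matrix n n R} (hU : U ∈ unitary (Matrix n n R))
    (B : Matrix n n R) : adjugate (U * B * star U) = U * adjugate B * star U := by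
  rw [adjugate_mul_distrib, adjugate_mul_distrib,
    adjugate_eq_det_smul_of_mul_eq_one (Unitary.mul_star_self_of_mem hU),
    adjugate_eq_det_smul_of_mul_eq_one (Unitary.star_mul_self_of_mem hU)]
  simp only [Matrix.smul_mul, Matrix.mul_smul, smul_smul, ← mul_assoc]
  rw [← det_mul, Unitary.mul_star_self_of_mem hU, det_one, one_smul]

theorem dotProduct_unitary_conj_diagonal_mulVec_le [PartialOrder R] [StarRing R]
    [StarOrderedRing R] {U : Matrix n n R} (hU : U ∈ unitary (Matrix n n R)) {d : n → R} {K : R}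
    (hd : ∀ i, d i ≤ K) (x : n → R) :
    star x ⬝ᵥ ((U * diagonal d * star U) *ᵥ x) ≤ K * (star x ⬝ᵥ x) := by
  have hgap : (U * diagonal (fun i ↦ K - d i) * star U).PosSemidef :=
    (PosSemidef.diagonal fun i ↦ sub_nonneg.mpr (hd i)).mul_mul_conjTranspose_same U
  have hsplit : U * diagonal (fun i ↦ K - d i) * star U = K • 1 - U * diagonal d * star U := by
    rw [show diagonal (fun i ↦ K - d i) = K • 1 - diagonal d by
        rw [smul_one_eq_diagonal, diagonal_sub], Matrix.mul_sub, Matrix.sub_mul, Matrix.mul_smul,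
      Matrix.smul_mul, mul_one, Unitary.mul_star_self_of_mem hU]
  have := hgap.dotProduct_mulVec_nonneg x
  rw [hsplit, sub_mulVec, dotProduct_sub, smul_mulVec, one_mulVec, dotProduct_smul,
    smul_eq_mul] at this
  exact sub_nonneg.mp this

theorem dotProduct_adjugate_mul_transpose_mulVec (A : Matrix n n R) (x : n → R) :
    x ⬝ᵥ (adjugate (A * Aᵀ) *ᵥ x) = (adjugate A *ᵥ x) ⬝ᵥ (adjugate A *ᵥ x) := by
  rw [adjugate_mul_distrib, ← adjugate_transpose, ← mulVec_mulVec, dotProduct_mulVec,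
    vecMul_transpose]

end CommRing

theorem PosSemidef.dotProduct_adjugate_mulVec_le {𝕜 : Type*} [RCLike 𝕜] {M : Matrix n n 𝕜}
    (hM : M.PosSemidef) {m : ℕ} (hcard : Fintype.card n = m + 1) (x : n → 𝕜) :
    star x ⬝ᵥ (adjugate M *ᵥ x) ≤ (M.trace / m) ^ m * (star x ⬝ᵥ x) := by
  set μ := hM.isHermitian.eigenvalues
  set U := hM.isHermitian.eigenvectorUnitary
  have hadj : adjugate M =
      U * diagonal (fun i ↦ ((∏ j ∈ univ.erase i, μ j : ℝ) : 𝕜)) * star (U : Matrix n n 𝕜) := by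
    conv_lhs => rw [hM.isHermitian.spectral_theorem]
    rw [Unitary.conjStarAlgAut_apply, adjugate_unitary_conj U.2, adjugate_diagonal]
    push_cast; rfl
  have htrace : M.trace = ((∑ j, μ j : ℝ) : 𝕜) := by
    rw [hM.isHermitian.trace_eq_sum_eigenvalues]; push_cast; rfl
  rw [hadj, htrace]
  refine dotProduct_unitary_conj_diagonal_mulVec_le U.2 (fun i ↦ ?_) x
  exact_mod_cast Real.prod_erase_le_sum_div_pow hcard hM.eigenvalues_nonneg i

end Matrix

theorem hsNorm_nonneg {n : ℕ} (A : Matrix (Fin n) (Fin n) ℝ) : 0 ≤ hsNorm A :=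
  Real.sqrt_nonneg _

theorem hsNorm_sq {n : ℕ} (A : Matrix (Fin n) (Fin n) ℝ) : hsNorm A ^ 2 = (A * Aᵀ).trace := by
  rw [hsNorm, Real.sq_sqrt (by positivity), trace_mul_transpose_self]

/-- For an `n×n` real matrix `A` with `n ≥ 1` and vectors `x, y ∈ ℝⁿ`,
`|⟨(Adj A) x, y⟩| ≤ ‖x‖ ‖y‖ ‖A‖_HS^(n−1) (n−1)^(−(n−1)/2)`
(with the convention `0^0 = 1` for the real power when `n = 1`). -/
theorem adjugate_inner_bound {n : ℕ} (hn : 1 ≤ n) (A : Matrix (Fin n) (Fin n) ℝ)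
    (x y : Fin n → ℝ) :
    |∑ i, (A.adjugate.mulVec x) i * y i| ≤
      Real.sqrt (∑ i, x i ^ 2) * Real.sqrt (∑ i, y i ^ 2) *
        hsNorm A ^ (n - 1) * ((n : ℝ) - 1) ^ (-(((n : ℝ) - 1) / 2)) := by
  obtain ⟨m, rfl⟩ : ∃ m, n = m + 1 := ⟨n - 1, by omega⟩
  set v := A.adjugate *ᵥ x
  have hv : v ⬝ᵥ v ≤ (hsNorm A ^ 2 / m) ^ m * (x ⬝ᵥ x) := by
    have := (posSemidef_self_mul_conjTranspose A).dotProduct_adjugate_mulVec_le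
      (Fintype.card_fin _) x
    rwa [conjTranspose_eq_transpose_of_trivial, star_trivial,
      dotProduct_adjugate_mul_transpose_mulVec, ← hsNorm_sq] at this
  have hcs : (v ⬝ᵥ y) ^ 2 ≤ (v ⬝ᵥ v) * (y ⬝ᵥ y) := by
    rw [dotProduct_self_eq_sum_sq, dotProduct_self_eq_sum_sq]
    exact sum_mul_sq_le_sq_mul_sq univ v y
  have hx : 0 ≤ x ⬝ᵥ x := by rw [dotProduct_self_eq_sum_sq]; positivity
  have hy : 0 ≤ y ⬝ᵥ y := by rw [dotProduct_self_eq_sum_sq]; positivity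
  calc |v ⬝ᵥ y| ≤ √((hsNorm A ^ 2 / m) ^ m * (x ⬝ᵥ x) * (y ⬝ᵥ y)) :=
        Real.abs_le_sqrt (hcs.trans (by gcongr))
    _ = _ := by
      rw [Real.sqrt_mul' _ hy, Real.sqrt_mul' _ hx, Real.sqrt_sq_div_natCast_pow (hsNorm_nonneg A)]
      simp only [dotProduct_self_eq_sum_sq]
      push_cast
      simp only [add_sub_cancel_right]
      ring
end

section
/- Let J : Λ × Λ → ℝ be a continuous bounded symmetric kernel on a compact set Λ ⊆ ℝ^d which is C¹, and for a finite configuration ξ = {x₁,…,x_n} ⊂ Λ with det J(ξ) > 0 define U(ξ) = −log det(J(x_i,x_j))_{i,j}. Then for any smooth compactly supported vector field v, the directional derivative satisfies |⟨∇U(ξ), v⟩| ≤ c n^{n/2} / det J(ξ), where c depends only on ‖J‖_∞, ‖∂J‖_∞, ‖v‖_∞ and not on ξ, and ∇U(ξ)·v = Σ_i ∂_i(−log det J)(x₁,…,x_n)·v(x_i). -/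
open Finset in
private lemma amgm_prod_le {n : ℕ} (f : Fin n → ℝ) (hf : ∀ i, 0 ≤ f i) :
    ∏ i, f i ≤ ((∑ i, f i) / n) ^ n := by
  rcases Nat.eq_zero_or_pos n with rfl | hn
  · simp
  have hn' : (0:ℝ) < n := by positivity
  have h := Real.geom_mean_le_arith_mean_weighted Finset.univ (fun _ => 1 / (n:ℝ)) f
    (fun i _ => by positivity) (by simp [Finset.sum_const]; field_simp) (fun i _ => hf i)
  have h2 : (∏ i, f i ^ (1/(n:ℝ))) ^ n = ∏ i, f i := by
    rw [← Finset.prod_pow]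
    congr 1; ext i
    rw [← Real.rpow_natCast (f i ^ (1/(n:ℝ))) n, ← Real.rpow_mul (hf i)]
    field_simp
    simp
  calc ∏ i, f i = (∏ i, f i ^ (1/(n:ℝ))) ^ n := h2.symm
    _ ≤ ((∑ i, (1/(n:ℝ)) * f i)) ^ n := by
        apply pow_le_pow_left₀ (Finset.prod_nonneg fun i _ => Real.rpow_nonneg (hf i) _) h
    _ = ((∑ i, f i) / n) ^ n := by rw [← Finset.mul_sum]; ring_nf

private lemma trace_eq_sum_eigs {n : ℕ} {A : Matrix (Fin n) (Fin n) ℝ} (hA : A.IsHermitian) :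
    A.trace = ∑ i, hA.eigenvalues i := by
  simpa using hA.trace_eq_sum_eigenvalues

/-- `det A ^ 2 ≤ (‖A‖_F² / n)^n`. -/
private lemma det_sq_le {n : ℕ} (A : Matrix (Fin n) (Fin n) ℝ) :
    A.det ^ 2 ≤ ((∑ i, ∑ j, A i j ^ 2) / n) ^ n := by
  have hB : (A * A.conjTranspose).PosSemidef := Matrix.posSemidef_self_mul_conjTranspose A
  have hH := hB.isHermitian
  have hdet : A.det ^ 2 = (A * A.conjTranspose).det := by
    rw [Matrix.det_mul, Matrix.conjTranspose_eq_transpose_of_trivial, Matrix.det_transpose, sq]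
  have h1 : (A * A.conjTranspose).det = ∏ i, hH.eigenvalues i := by
    have := hH.det_eq_prod_eigenvalues
    simpa using this
  have h2 : (A * A.conjTranspose).trace = ∑ i, hH.eigenvalues i := trace_eq_sum_eigs hH
  have h3 : (A * A.conjTranspose).trace = ∑ i, ∑ j, A i j ^ 2 := by
    simp [Matrix.trace, Matrix.diag, Matrix.mul_apply, Matrix.conjTranspose_apply, sq]
  rw [hdet, h1, ← h3, h2]
  exact amgm_prod_le _ fun i => hB.eigenvalues_nonneg i

open Finset in
private lemma det_norm_bound {n : ℕ} (m : Fin n → (Fin n → ℝ)) :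
    ‖(Matrix.detRowAlternating : (Fin n → ℝ) [⋀^Fin n]→ₗ[ℝ] ℝ).toMultilinearMap m‖ ≤
      (n.factorial : ℝ) * ∏ i, ‖m i‖ := by
  have : (Matrix.detRowAlternating : (Fin n → ℝ) [⋀^Fin n]→ₗ[ℝ] ℝ).toMultilinearMap m
      = Matrix.det (Matrix.of m) := rfl
  rw [this, Matrix.det_apply]
  calc ‖∑ σ : Equiv.Perm (Fin n), Equiv.Perm.sign σ • ∏ i, Matrix.of m (σ i) i‖
      ≤ ∑ σ : Equiv.Perm (Fin n), ‖Equiv.Perm.sign σ • ∏ i, Matrix.of m (σ i) i‖ :=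
        norm_sum_le _ _
    _ ≤ ∑ σ : Equiv.Perm (Fin n), ∏ i, ‖m i‖ := by
        apply Finset.sum_le_sum
        intro σ _
        have h1 : ‖Equiv.Perm.sign σ • ∏ i, Matrix.of m (σ i) i‖
            = ‖∏ i, m (σ i) i‖ := by
          rcases Int.units_eq_one_or (Equiv.Perm.sign σ) with h | h <;> simp [h]
        rw [h1]
        calc ‖∏ i, m (σ i) i‖ ≤ ∏ i, ‖m (σ i) i‖ := by
              rw [Real.norm_eq_abs, Finset.abs_prod]
              simp [Real.norm_eq_abs]
          _ ≤ ∏ i, ‖m (σ i)‖ := by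
              apply Finset.prod_le_prod (fun i _ => norm_nonneg _)
              exact fun i _ => norm_le_pi_norm (m (σ i)) i
          _ = ∏ i, ‖m i‖ := Equiv.prod_comp σ (fun i => ‖m i‖)
    _ = (n.factorial : ℝ) * ∏ i, ‖m i‖ := by
        rw [Finset.sum_const, Finset.card_univ, Fintype.card_perm, nsmul_eq_mul]
        simp

/-- Determinant (in the rows) as a continuous multilinear map. -/
private noncomputable def detCML (n : ℕ) :
    ContinuousMultilinearMap ℝ (fun _ : Fin n => (Fin n → ℝ)) ℝ :=
  MultilinearMap.mkContinuous
    (Matrix.detRowAlternating : (Fin n → ℝ) [⋀^Fin n]→ₗ[ℝ] ℝ).toMultilinearMap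
    (n.factorial : ℝ) (fun m => det_norm_bound m)

private lemma detCML_apply {n : ℕ} (m : Fin n → (Fin n → ℝ)) :
    detCML n m = Matrix.det (Matrix.of m) := rfl


open Finset in
private lemma key_det_bound {β : Type*} [Fintype β] {K C δ : ℝ} (hK : 0 ≤ K) (hC : 0 ≤ C)
    (hδ : 0 ≤ δ) {n : ℕ} (r : Fin n → Fin n → ℝ) (ρ : Fin n → β) (rv : β → Fin n → ℝ)
    (hrv : ∀ a j, |rv a j| ≤ K) (hre : ∀ i j, |r i j - rv (ρ i) j| ≤ δ)
    (u : Fin n → ℝ) (hu : ∀ j, |u j| ≤ C) (i₀ : Fin n) :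
    |Matrix.det (Matrix.of (Function.update r i₀ u))| ≤
      2 ^ n * Real.sqrt (C ^ 2 + (Fintype.card β) * K ^ 2 + n * δ ^ 2) ^ n := by
  rcases Nat.eq_zero_or_pos n with rfl | hn
  · exact i₀.elim0
  set N := Fintype.card β with hN
  set B : ℝ := C ^ 2 + N * K ^ 2 + n * δ ^ 2 with hB
  have hB0 : 0 ≤ B := by positivity
  -- split the rows
  set r' : Fin n → Fin n → ℝ := Function.update (fun i => rv (ρ i)) i₀ u with hr'
  set e' : Fin n → Fin n → ℝ :=
    Function.update (fun i => fun j => r i j - rv (ρ i) j) i₀ 0 with he'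
  have hsplit : Function.update r i₀ u = r' + e' := by
    funext i
    by_cases h : i = i₀
    · subst h; simp [hr', he']
    · funext j
      simp [hr', he', Function.update_of_ne h]
  have hdet : Matrix.det (Matrix.of (Function.update r i₀ u)) =
      (Matrix.detRowAlternating : (Fin n → ℝ) [⋀^Fin n]→ₗ[ℝ] ℝ).toMultilinearMap (r' + e') := by
    rw [hsplit]; rfl
  rw [hdet, MultilinearMap.map_add_univ]
  -- bound each term
  have claim : ∀ s : Finset (Fin n),
      |(Matrix.detRowAlternating : (Fin n → ℝ) [⋀^Fin n]→ₗ[ℝ] ℝ).toMultilinearMap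
        (s.piecewise r' e')| ≤ Real.sqrt B ^ n := by
    intro s
    by_cases hi₀ : i₀ ∈ s
    · by_cases hcard : N < (s.erase i₀).card
      · -- pigeonhole : two equal rows
        obtain ⟨i₁, h₁, i₂, h₂, hne, heq⟩ :=
          Finset.exists_ne_map_eq_of_card_lt_of_maps_to
            (by simpa using hcard) (fun i _ => Finset.mem_univ (ρ i))
        have hrow : (s.piecewise r' e') i₁ = (s.piecewise r' e') i₂ := by
          rw [Finset.piecewise_eq_of_mem _ _ _ (Finset.mem_of_mem_erase h₁),
            Finset.piecewise_eq_of_mem _ _ _ (Finset.mem_of_mem_erase h₂), hr',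
            Function.update_of_ne (Finset.ne_of_mem_erase h₁),
            Function.update_of_ne (Finset.ne_of_mem_erase h₂)]
          simp [heq]
        have : (Matrix.detRowAlternating : (Fin n → ℝ) [⋀^Fin n]→ₗ[ℝ] ℝ)
            (s.piecewise r' e') = 0 :=
          AlternatingMap.map_eq_zero_of_eq _ _ hrow hne
        rw [show (Matrix.detRowAlternating : (Fin n → ℝ) [⋀^Fin n]→ₗ[ℝ] ℝ).toMultilinearMap
            (s.piecewise r' e')
          = (Matrix.detRowAlternating : (Fin n → ℝ) [⋀^Fin n]→ₗ[ℝ] ℝ) (s.piecewise r' e')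
          from rfl, this]
        simp only [abs_zero]
        positivity
      · -- honest bound via det_sq_le
        push_neg at hcard
        set p := s.piecewise r' e' with hp
        have hrowbound : ∀ i, ∑ j, p i j ^ 2 ≤
            (n : ℝ) * (if i = i₀ then C ^ 2 else if i ∈ s then K ^ 2 else δ ^ 2) := by
          intro i
          have hentry : ∀ j, p i j ^ 2 ≤
              (if i = i₀ then C ^ 2 else if i ∈ s then K ^ 2 else δ ^ 2) := by
            intro j
            by_cases h : i = i₀
            · have hrow : p i = u := by
                rw [hp, h, Finset.piecewise_eq_of_mem _ _ _ hi₀, hr']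
                exact Function.update_self _ _ _
              rw [hrow]; simp only [if_pos h]
              rw [← sq_abs]; exact pow_le_pow_left₀ (abs_nonneg _) (hu j) 2
            · by_cases hs : i ∈ s
              · have hrow : p i = rv (ρ i) := by
                  rw [hp, Finset.piecewise_eq_of_mem _ _ _ hs, hr',
                    Function.update_of_ne h]
                rw [hrow]; simp only [if_neg h, if_pos hs]
                rw [← sq_abs]; exact pow_le_pow_left₀ (abs_nonneg _) (hrv _ j) 2
              · have hrow : p i = fun j => r i j - rv (ρ i) j := by
                  rw [hp, Finset.piecewise_eq_of_notMem _ _ _ hs, he',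
                    Function.update_of_ne h]
                rw [hrow]; simp only [if_neg h, if_neg hs]
                rw [← sq_abs]; exact pow_le_pow_left₀ (abs_nonneg _) (hre i j) 2
          calc ∑ j, p i j ^ 2 ≤ ∑ _j : Fin n,
                (if i = i₀ then C ^ 2 else if i ∈ s then K ^ 2 else δ ^ 2) :=
              Finset.sum_le_sum fun j _ => hentry j
            _ = (n : ℝ) * _ := by rw [Finset.sum_const, Finset.card_univ]; simp [nsmul_eq_mul]
        have htot : ∑ i, ∑ j, p i j ^ 2 ≤ (n : ℝ) * B := by
          have h1 : ∑ i, ∑ j, p i j ^ 2 ≤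
              ∑ i, (n : ℝ) * (if i = i₀ then C ^ 2 else if i ∈ s then K ^ 2 else δ ^ 2) :=
            Finset.sum_le_sum fun i _ => hrowbound i
          refine h1.trans ?_
          rw [← Finset.mul_sum]
          apply mul_le_mul_of_nonneg_left _ (by positivity : (0:ℝ) ≤ n)
          -- ∑ i, ite ... ≤ B
          have h2 : ∀ i ∈ Finset.univ.erase i₀,
              (if i = i₀ then C ^ 2 else if i ∈ s then K ^ 2 else δ ^ 2) ≤
                δ ^ 2 + (if i ∈ s.erase i₀ then K ^ 2 else 0) := by
            intro i hi
            have h : i ≠ i₀ := Finset.ne_of_mem_erase hi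
            rw [if_neg h]
            by_cases hs : i ∈ s
            · rw [if_pos hs, if_pos (Finset.mem_erase.2 ⟨h, hs⟩)]
              nlinarith [sq_nonneg δ]
            · rw [if_neg hs, if_neg (fun hc => hs (Finset.mem_of_mem_erase hc))]
              nlinarith [sq_nonneg δ]
          calc ∑ i, (if i = i₀ then C ^ 2 else if i ∈ s then K ^ 2 else δ ^ 2)
              = (if i₀ = i₀ then C ^ 2 else if i₀ ∈ s then K ^ 2 else δ ^ 2) +
                ∑ i ∈ Finset.univ.erase i₀,
                  (if i = i₀ then C ^ 2 else if i ∈ s then K ^ 2 else δ ^ 2) :=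
                (Finset.add_sum_erase _ _ (Finset.mem_univ i₀)).symm
            _ ≤ C ^ 2 + ∑ i ∈ Finset.univ.erase i₀,
                  (δ ^ 2 + (if i ∈ s.erase i₀ then K ^ 2 else 0)) := by
                rw [if_pos rfl]
                exact add_le_add (le_refl _) (Finset.sum_le_sum h2)
            _ ≤ B := by
                rw [Finset.sum_add_distrib, Finset.sum_const]
                have hc1 : ((Finset.univ.erase i₀).card : ℝ) ≤ (n : ℝ) := by
                  have := Finset.card_erase_le (s := (Finset.univ : Finset (Fin n))) (a := i₀)
                  simp only [Finset.card_univ, Fintype.card_fin] at this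
                  exact_mod_cast this.trans (le_refl n)
                have hc2 : ∑ i ∈ Finset.univ.erase i₀, (if i ∈ s.erase i₀ then K ^ 2 else 0)
                    ≤ (N : ℝ) * K ^ 2 := by
                  rw [Finset.sum_ite_mem]
                  rw [Finset.sum_const]
                  have hcap : ((Finset.univ.erase i₀ ∩ s.erase i₀).card : ℝ) ≤ (N : ℝ) := by
                    have h1 : (Finset.univ.erase i₀ ∩ s.erase i₀).card ≤ (s.erase i₀).card :=
                      Finset.card_le_card (Finset.inter_subset_right)
                    exact_mod_cast h1.trans hcard
                  rw [nsmul_eq_mul]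
                  exact mul_le_mul_of_nonneg_right hcap (by positivity)
                rw [hB, nsmul_eq_mul]
                have : ((Finset.univ.erase i₀).card : ℝ) * δ ^ 2 ≤ (n : ℝ) * δ ^ 2 :=
                  mul_le_mul_of_nonneg_right hc1 (by positivity)
                linarith
        -- conclude via det_sq_le
        have hdsq := det_sq_le (Matrix.of p)
        have hdiv : (∑ i, ∑ j, (Matrix.of p) i j ^ 2) / (n : ℝ) ≤ B := by
          rw [div_le_iff₀ (by exact_mod_cast hn : (0:ℝ) < n)]
          simpa [mul_comm] using htot
        have habs : |Matrix.det (Matrix.of p)| ≤ Real.sqrt B ^ n := by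
          have h1 : Matrix.det (Matrix.of p) ^ 2 ≤ B ^ n := by
            refine hdsq.trans ?_
            exact pow_le_pow_left₀ (by positivity) hdiv n
          have h2 : |Matrix.det (Matrix.of p)| = Real.sqrt (Matrix.det (Matrix.of p) ^ 2) := by
            rw [Real.sqrt_sq_eq_abs]
          have h3 : (Real.sqrt B ^ n) ^ 2 = B ^ n := by
            rw [← pow_mul, mul_comm, pow_mul, Real.sq_sqrt hB0]
          rw [h2]
          calc Real.sqrt ((Matrix.of p).det ^ 2) ≤ Real.sqrt (B ^ n) := Real.sqrt_le_sqrt h1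
            _ = Real.sqrt B ^ n := by rw [← h3, Real.sqrt_sq (by positivity)]
        exact habs
    · -- row i₀ is zero
      have hz : (s.piecewise r' e') i₀ = 0 := by
        rw [Finset.piecewise_eq_of_notMem _ _ _ hi₀, he']
        simp
      rw [MultilinearMap.map_coord_zero _ i₀ hz]
      simp only [abs_zero]
      positivity
  calc |∑ s : Finset (Fin n),
      (Matrix.detRowAlternating : (Fin n → ℝ) [⋀^Fin n]→ₗ[ℝ] ℝ).toMultilinearMap
        (s.piecewise r' e')| ≤
      ∑ s : Finset (Fin n), |(Matrix.detRowAlternating : (Fin n → ℝ) [⋀^Fin n]→ₗ[ℝ] ℝ).toMultilinearMap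
        (s.piecewise r' e')| := Finset.abs_sum_le_sum_abs _ _
    _ ≤ ∑ _s : Finset (Fin n), Real.sqrt B ^ n := Finset.sum_le_sum fun s _ => claim s
    _ = 2 ^ n * Real.sqrt B ^ n := by
        rw [Finset.sum_const, Finset.card_univ, Fintype.card_finset, Fintype.card_fin,
          nsmul_eq_mul]
        push_cast
        ring


open ContinuousLinearMap in
private lemma deriv_formula {d n : ℕ}
    (J : EuclideanSpace ℝ (Fin d) → EuclideanSpace ℝ (Fin d) → ℝ)
    (hJ : ContDiff ℝ 1 fun p : EuclideanSpace ℝ (Fin d) × EuclideanSpace ℝ (Fin d) =>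
      J p.1 p.2)
    (x : Fin n → EuclideanSpace ℝ (Fin d))
    (hpos : Matrix.det (Matrix.of fun i j => J (x i) (x j)) ≠ 0)
    (w : Fin n → EuclideanSpace ℝ (Fin d)) :
    fderiv ℝ (fun y : Fin n → EuclideanSpace ℝ (Fin d) =>
        Real.log (Matrix.det (Matrix.of fun i j => J (y i) (y j)))) x w =
      (Matrix.det (Matrix.of fun i j => J (x i) (x j)))⁻¹ *
        ∑ i, Matrix.det (Matrix.of (Function.update (fun i j => J (x i) (x j)) i
          (fun j => fderiv ℝ (fun p : EuclideanSpace ℝ (Fin d) × EuclideanSpace ℝ (Fin d) =>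
            J p.1 p.2) (x i, x j) (w i, w j)))) := by
  classical
  set F : EuclideanSpace ℝ (Fin d) × EuclideanSpace ℝ (Fin d) → ℝ := fun p => J p.1 p.2 with hFdef
  set g : Fin n → (Fin n → EuclideanSpace ℝ (Fin d)) → (Fin n → ℝ) := fun i y j => J (y i) (y j) with hgdef
  set φ : Fin n → Fin n → ((Fin n → EuclideanSpace ℝ (Fin d)) →L[ℝ] EuclideanSpace ℝ (Fin d) × EuclideanSpace ℝ (Fin d)) :=
    fun i j => (ContinuousLinearMap.proj i).prod (ContinuousLinearMap.proj j) with hφdef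
  set g' : Fin n → ((Fin n → EuclideanSpace ℝ (Fin d)) →L[ℝ] (Fin n → ℝ)) :=
    fun i => ContinuousLinearMap.pi (fun j => (fderiv ℝ F (x i, x j)).comp (φ i j)) with hg'def
  have hgi : ∀ i, HasFDerivAt (g i) (g' i) x := by
    intro i
    apply hasFDerivAt_pi.2
    intro j
    have h1 : HasFDerivAt F (fderiv ℝ F (x i, x j)) (x i, x j) :=
      (hJ.differentiable one_ne_zero _).hasFDerivAt
    have h2 : HasFDerivAt (φ i j) (φ i j) x := (φ i j).hasFDerivAt
    have h3 := h1.comp x h2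
    exact h3
  have hDet := HasFDerivAt.multilinear_comp (detCML n) hgi
  have hfun : (fun y => detCML n (fun i => g i y)) =
      (fun y : Fin n → EuclideanSpace ℝ (Fin d) => Matrix.det (Matrix.of fun i j => J (y i) (y j))) := by
    funext y
    rw [detCML_apply]
  rw [hfun] at hDet
  have hlog := hDet.log hpos
  rw [hlog.fderiv]
  rw [ContinuousLinearMap.smul_apply, smul_eq_mul]
  congr 1
  rw [ContinuousLinearMap.sum_apply]
  apply Finset.sum_congr rfl
  intro i _
  rw [ContinuousLinearMap.comp_apply]
  have h4 : (detCML n).toContinuousLinearMap (fun j => g j x) i (g' i w) =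
      detCML n (Function.update (fun j => g j x) i (g' i w)) := by
    simp [ContinuousMultilinearMap.toContinuousLinearMap]
  rw [h4, detCML_apply]
  congr 1
/-- Let `J` be a `C¹` bounded symmetric kernel on a compact `Λ ⊆ ℝ^d`, and for a finite
configuration `ξ = (x_1,…,x_n) ⊂ Λ` with `det J(ξ) > 0` let `U(ξ) = − log det (J(x_i,x_j))`.
Then for any smooth compactly supported vector field `v` there is a constant `c > 0`,
independent of the configuration, such that
`|⟨∇U(ξ), v⟩| = |d(log det J)(ξ)·(v(x_1),…,v(x_n))| ≤ c n^{n/2} / det J(ξ)`. -/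
theorem gradient_log_det_bound {d : ℕ}
    (Λ : Set (EuclideanSpace ℝ (Fin d))) (hΛ : IsCompact Λ)
    (J : EuclideanSpace ℝ (Fin d) → EuclideanSpace ℝ (Fin d) → ℝ)
    (hJ : ContDiff ℝ 1 fun p : EuclideanSpace ℝ (Fin d) × EuclideanSpace ℝ (Fin d) =>
      J p.1 p.2)
    (hsym : ∀ x y, J x y = J y x)
    (v : EuclideanSpace ℝ (Fin d) → EuclideanSpace ℝ (Fin d))
    (hv : ContDiff ℝ (⊤ : ℕ∞) v) (hvs : HasCompactSupport v) :
    ∃ c > 0, ∀ (n : ℕ) (x : Fin n → EuclideanSpace ℝ (Fin d)),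
      (∀ i, x i ∈ Λ) →
      0 < Matrix.det (Matrix.of fun i j => J (x i) (x j)) →
      |fderiv ℝ (fun y : Fin n → EuclideanSpace ℝ (Fin d) =>
          Real.log (Matrix.det (Matrix.of fun i j => J (y i) (y j)))) x
          (fun i => v (x i))| ≤
        c * (n : ℝ) ^ ((n : ℝ) / 2) / Matrix.det (Matrix.of fun i j => J (x i) (x j)) := by
  classical
  -- the compact set `S` and basic bounds
  set S : Set (EuclideanSpace ℝ (Fin d)) := insert 0 Λ with hSdef
  have hS : IsCompact S := hΛ.insert 0
  have hΛS : Λ ⊆ S := Set.subset_insert 0 Λ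
  have hSS : IsCompact (S ×ˢ S) := hS.prod hS
  obtain ⟨K0, hK0⟩ := hSS.exists_bound_of_continuousOn hJ.continuous.continuousOn
  obtain ⟨K, hKnn, hK⟩ : ∃ K : ℝ, 0 ≤ K ∧ ∀ p ∈ S, ∀ q ∈ S, |J p q| ≤ K := by
    refine ⟨max K0 0, le_max_right _ _, ?_⟩
    intro p hp q hq
    have := hK0 (p, q) (Set.mk_mem_prod hp hq)
    rw [Real.norm_eq_abs] at this
    exact this.trans (le_max_left _ _)
  have hcf : Continuous (fderiv ℝ (fun p : EuclideanSpace ℝ (Fin d) ×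
      EuclideanSpace ℝ (Fin d) => J p.1 p.2)) := hJ.continuous_fderiv one_ne_zero
  obtain ⟨L0, hL0⟩ := hSS.exists_bound_of_continuousOn hcf.continuousOn
  obtain ⟨L, hLnn, hL⟩ : ∃ L : ℝ, 0 ≤ L ∧ ∀ p ∈ S, ∀ q ∈ S, ‖fderiv ℝ
      (fun p : EuclideanSpace ℝ (Fin d) × EuclideanSpace ℝ (Fin d) => J p.1 p.2) (p, q)‖ ≤ L := by
    refine ⟨max L0 0, le_max_right _ _, ?_⟩
    intro p hp q hq
    exact (hL0 (p, q) (Set.mk_mem_prod hp hq)).trans (le_max_left _ _)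
  -- bound on `v`
  obtain ⟨Cv0, hCv0⟩ := hvs.isCompact.exists_bound_of_continuousOn hv.continuous.continuousOn
  obtain ⟨Cv, hCvnn, hCv⟩ : ∃ Cv : ℝ, 0 ≤ Cv ∧ ∀ y, ‖v y‖ ≤ Cv := by
    refine ⟨max Cv0 0, le_max_right _ _, ?_⟩
    intro y
    by_cases hy : y ∈ tsupport v
    · exact (hCv0 y hy).trans (le_max_left _ _)
    · rw [image_eq_zero_of_notMem_tsupport hy]; simpa using le_max_right Cv0 0
  obtain ⟨C₂, hC₂nn, hC₂⟩ : ∃ C₂ : ℝ, 0 ≤ C₂ ∧ L * Cv ≤ C₂ :=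
    ⟨L * Cv, mul_nonneg hLnn hCvnn, le_refl _⟩
  -- uniform continuity and a finite net
  have hUC := hSS.uniformContinuousOn_of_continuous hJ.continuous.continuousOn
  rw [Metric.uniformContinuousOn_iff] at hUC
  obtain ⟨η, hη, hUCη⟩ := hUC (1/8) (by norm_num)
  have hcover : S ⊆ ⋃ p ∈ S, Metric.ball p η := by
    intro z hz
    exact Set.mem_iUnion₂.2 ⟨z, hz, by simpa using hη⟩
  obtain ⟨t, htS, htfin, htcov⟩ :=
    hS.elim_finite_subcover_image (fun p _ => Metric.isOpen_ball) hcover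
  haveI : Fintype t := htfin.fintype
  obtain ⟨B₀, hB₀nn, hB₀def⟩ : ∃ B₀ : ℝ, 0 ≤ B₀ ∧
      B₀ = C₂ ^ 2 + (Fintype.card t) * K ^ 2 := ⟨_, by positivity, rfl⟩
  obtain ⟨n₀, hn₀⟩ : ∃ n₀ : ℕ, (32:ℝ) * B₀ ≤ (n₀ : ℝ) := exists_nat_ge _
  obtain ⟨M₁, hM₁1, hM₁⟩ : ∃ M₁ : ℝ, 1 ≤ M₁ ∧ Real.sqrt (B₀ + n₀) ≤ M₁ :=
    ⟨max 1 _, le_max_left _ _, le_max_right _ _⟩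
  obtain ⟨c, hc1, hcge⟩ : ∃ c : ℝ, 1 ≤ c ∧ (n₀ : ℝ) * 2 ^ n₀ * M₁ ^ n₀ ≤ c - 1 := by
    refine ⟨(n₀ : ℝ) * 2 ^ n₀ * M₁ ^ n₀ + 1, ?_, by linarith⟩
    have h0 : (0:ℝ) ≤ (n₀ : ℝ) * 2 ^ n₀ * M₁ ^ n₀ := by positivity
    linarith
  refine ⟨c, by linarith, ?_⟩
  intro n x hx hpos
  -- rewrite the derivative
  set w : Fin n → EuclideanSpace ℝ (Fin d) := fun i => v (x i) with hwdef
  rw [deriv_formula J hJ x hpos.ne' w]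
  set r : Fin n → Fin n → ℝ := fun i j => J (x i) (x j) with hrdef
  set u : Fin n → Fin n → ℝ := fun i j => fderiv ℝ (fun p : EuclideanSpace ℝ (Fin d) ×
    EuclideanSpace ℝ (Fin d) => J p.1 p.2) (x i, x j) (w i, w j) with hudef
  have hxS : ∀ i, x i ∈ S := fun i => hΛS (hx i)
  -- choose net representatives
  have hchoice : ∀ i : Fin n, ∃ p : t, x i ∈ Metric.ball (p : EuclideanSpace ℝ (Fin d)) η := by
    intro i
    have := htcov (hxS i)
    rw [Set.mem_iUnion₂] at this
    obtain ⟨p, hp, hball⟩ := this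
    exact ⟨⟨p, hp⟩, hball⟩
  choose ρ hρ using hchoice
  set rv : t → Fin n → ℝ := fun a j => J (a : EuclideanSpace ℝ (Fin d)) (x j) with hrvdef
  have hrv : ∀ (a : t) (j : Fin n), |rv a j| ≤ K := fun a j =>
    hK _ (htS a.2) _ (hxS j)
  have hre : ∀ i j, |r i j - rv (ρ i) j| ≤ 1/8 := by
    intro i j
    have hd : dist ((x i, x j) : EuclideanSpace ℝ (Fin d) × EuclideanSpace ℝ (Fin d))
        (((ρ i : EuclideanSpace ℝ (Fin d)), x j)) < η := by
      rw [Prod.dist_eq]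
      simp only [dist_self]
      have := Metric.mem_ball.1 (hρ i)
      simp [this, hη]
    have h1 := hUCη (x i, x j) (Set.mk_mem_prod (hxS i) (hxS j))
      ((ρ i : EuclideanSpace ℝ (Fin d)), x j)
      (Set.mk_mem_prod (htS (ρ i).2) (hxS j)) hd
    rw [Real.dist_eq] at h1
    exact h1.le
  have hu : ∀ i j, |u i j| ≤ C₂ := by
    intro i j
    have h1 : |u i j| ≤ ‖fderiv ℝ (fun p : EuclideanSpace ℝ (Fin d) ×
        EuclideanSpace ℝ (Fin d) => J p.1 p.2) (x i, x j)‖ * ‖((w i, w j) :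
        EuclideanSpace ℝ (Fin d) × EuclideanSpace ℝ (Fin d))‖ := by
      rw [← Real.norm_eq_abs]
      exact ContinuousLinearMap.le_opNorm _ _
    have h2 : ‖((w i, w j) : EuclideanSpace ℝ (Fin d) × EuclideanSpace ℝ (Fin d))‖ ≤ Cv := by
      rw [Prod.norm_def]
      exact max_le (hCv (x i)) (hCv (x j))
    refine h1.trans (le_trans ?_ hC₂)
    exact mul_le_mul (hL _ (hxS i) _ (hxS j)) h2 (norm_nonneg _) hLnn
  -- apply the key bound
  have key : ∀ i₀ : Fin n, |Matrix.det (Matrix.of (Function.update r i₀ (u i₀)))| ≤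
      2 ^ n * Real.sqrt (B₀ + n * (1/8 : ℝ) ^ 2) ^ n := by
    intro i₀
    have := key_det_bound hKnn hC₂nn (by norm_num) r ρ rv hrv hre (u i₀)
      (fun j => hu i₀ j) i₀
    rw [hB₀def]
    exact this
  -- sum the bounds
  have hsum : |∑ i, Matrix.det (Matrix.of (Function.update r i (u i)))| ≤
      (n : ℝ) * (2 ^ n * Real.sqrt (B₀ + n * (1/8 : ℝ) ^ 2) ^ n) := by
    calc |∑ i, Matrix.det (Matrix.of (Function.update r i (u i)))|
        ≤ ∑ i : Fin n, |Matrix.det (Matrix.of (Function.update r i (u i)))| :=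
          Finset.abs_sum_le_sum_abs _ _
      _ ≤ ∑ _i : Fin n, 2 ^ n * Real.sqrt (B₀ + n * (1/8 : ℝ) ^ 2) ^ n := by
          apply Finset.sum_le_sum
          intro i _
          exact key i
      _ = (n : ℝ) * (2 ^ n * Real.sqrt (B₀ + n * (1/8 : ℝ) ^ 2) ^ n) := by
          rw [Finset.sum_const, Finset.card_univ, Fintype.card_fin, nsmul_eq_mul]
  -- numerical comparison with c * n^(n/2)
  have hnum : (n : ℝ) * (2 ^ n * Real.sqrt (B₀ + n * (1/8 : ℝ) ^ 2) ^ n) ≤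
      c * Real.sqrt n ^ n := by
    have hsqrtn1 : (1:ℝ) ≤ Real.sqrt n ^ n := by
      rcases Nat.eq_zero_or_pos n with rfl | hn
      · simp
      · have h1 : (1:ℝ) ≤ Real.sqrt n := by
          rw [show (1:ℝ) = Real.sqrt 1 by simp]
          exact Real.sqrt_le_sqrt (by exact_mod_cast hn)
        exact one_le_pow₀ h1
    by_cases hcase : n₀ ≤ n
    · -- large n
      have hn32 : (32:ℝ) * B₀ ≤ n := by
        have h3 : ((n₀:ℝ)) ≤ (n:ℝ) := by exact_mod_cast hcase
        linarith
      have hBle : B₀ + n * (1/8 : ℝ) ^ 2 ≤ n / 16 := by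
        nlinarith [hB₀nn]
      have hsq : Real.sqrt (B₀ + n * (1/8 : ℝ) ^ 2) ≤ Real.sqrt n / 4 := by
        have h1 : Real.sqrt (B₀ + n * (1/8 : ℝ) ^ 2) ≤ Real.sqrt ((n:ℝ) / 16) :=
          Real.sqrt_le_sqrt hBle
        have h2 : Real.sqrt ((n:ℝ) / 16) = Real.sqrt n / 4 := by
          rw [show (n:ℝ)/16 = (n:ℝ) * (1/4)^2 by ring, Real.sqrt_mul (by positivity),
            Real.sqrt_sq (by norm_num)]
          ring
        linarith
      have hpow : Real.sqrt (B₀ + n * (1/8 : ℝ) ^ 2) ^ n ≤ (Real.sqrt n / 4) ^ n :=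
        pow_le_pow_left₀ (Real.sqrt_nonneg _) hsq n
      have hn2 : (n:ℝ) ≤ 2 ^ n := by
        exact_mod_cast (Nat.lt_two_pow_self (n := n)).le
      calc (n : ℝ) * (2 ^ n * Real.sqrt (B₀ + n * (1/8 : ℝ) ^ 2) ^ n)
          ≤ (n : ℝ) * (2 ^ n * (Real.sqrt n / 4) ^ n) := by
            apply mul_le_mul_of_nonneg_left _ (by positivity)
            exact mul_le_mul_of_nonneg_left hpow (by positivity)
        _ = (n : ℝ) * (Real.sqrt n ^ n / 2 ^ n) := by
            rw [div_pow]
            rw [show ((4:ℝ)) ^ n = 2 ^ n * 2 ^ n by rw [← mul_pow]; norm_num]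
            field_simp
        _ ≤ 2 ^ n * (Real.sqrt n ^ n / 2 ^ n) := by
            apply mul_le_mul_of_nonneg_right hn2 (by positivity)
        _ = Real.sqrt n ^ n := by field_simp
        _ ≤ c * Real.sqrt n ^ n := le_mul_of_one_le_left (by positivity) hc1
    · -- small n
      push_neg at hcase
      have h1 : (n:ℝ) ≤ n₀ := by exact_mod_cast hcase.le
      have h2 : (2:ℝ) ^ n ≤ 2 ^ n₀ := pow_le_pow_right₀ (by norm_num) hcase.le
      have h3 : Real.sqrt (B₀ + n * (1/8 : ℝ) ^ 2) ^ n ≤ M₁ ^ n₀ := by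
        have ha : Real.sqrt (B₀ + n * (1/8 : ℝ) ^ 2) ≤ M₁ := by
          refine le_trans (Real.sqrt_le_sqrt ?_) hM₁
          have : (n:ℝ) * (1/8 : ℝ)^2 ≤ (n₀ : ℝ) := by nlinarith [h1]
          linarith
        calc Real.sqrt (B₀ + n * (1/8 : ℝ) ^ 2) ^ n ≤ M₁ ^ n :=
            pow_le_pow_left₀ (Real.sqrt_nonneg _) ha n
          _ ≤ M₁ ^ n₀ := pow_le_pow_right₀ hM₁1 hcase.le
      calc (n : ℝ) * (2 ^ n * Real.sqrt (B₀ + n * (1/8 : ℝ) ^ 2) ^ n)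
          ≤ (n₀ : ℝ) * (2 ^ n₀ * M₁ ^ n₀) := by
            apply mul_le_mul h1 _ (by positivity) (by positivity)
            apply mul_le_mul h2 h3 (by positivity) (by positivity)
        _ ≤ c := by linarith
        _ ≤ c * Real.sqrt n ^ n := le_mul_of_one_le_right (by linarith) hsqrtn1
  -- put everything together
  have hrpow : (n : ℝ) ^ ((n : ℝ) / 2) = Real.sqrt n ^ n := by
    rw [Real.rpow_div_two_eq_sqrt _ (by positivity)]
    rw [← Real.rpow_natCast (Real.sqrt n) n]
  rw [abs_mul, abs_inv, abs_of_pos hpos, hrpow]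
  have hinv : (0:ℝ) ≤ (Matrix.det (Matrix.of fun i j => J (x i) (x j)))⁻¹ :=
    inv_nonneg.2 hpos.le
  refine le_trans (mul_le_mul_of_nonneg_left (hsum.trans hnum) hinv) (le_of_eq ?_)
  rw [div_eq_mul_inv]
  ring
end
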